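/- arXiv:1606.09444 — 2 statements merged into one kernel-verified Lean document; each statement's English description precedes it below -/
import Mathlib

section
/- For every t ∈ k' with v(t) ≥ 0 there exists h ∈ GL₅(k'[[ε]]) such that every ε-coefficient of every entry of the matrix h·x_t·σ(h)^{-1} − b₂ has strictly positive valuation v. Here x_t is the 5×5 matrix with rows (1,0,0,0,0), (0,0,1,t,0), (0,ε,0,0,0), (0,0,0,0,1), (0,0,0,ε,0), and b₂ is the 5×5 matrix with rows (0,1,0,0,0), (0,0,1,0,0), (ε,0,0,0,0), (0,0,0,0,1), (0,0,0,ε,0). -/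
/-!
Put `Φ := x_t ∘ σ`, a `σ`-semilinear operator on `k'[[ε]]⁵`. It suffices to find a basis `F`
of `k'[[ε]]⁵` on which `Φ` acts by the matrix `b₂ + D`, where `D` has the entry `π` at `(0,0)`,
an entry `T` with `v(T) > 0` at `(1,3)` and zeros elsewhere: then `h := F⁻¹` gives
`h x_t σ(h)⁻¹ = b₂ + D`. The basis is made of two `Φ`-chains `Φ²f₃, Φf₃, f₃` and `Φf₅, f₅`,
subject to `Φ³f₃ = πΦ²f₃ + εf₃` and `Φ²f₅ = TΦf₃ + εf₅`. Coefficientwise these are equations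
`z^N = w z^M + β` with `M < N`, solved one coefficient after the other in the algebraically
closed field `k'`. The constant term `b₀` of the third entry of `f₃` satisfies
`b₀^(q²-1) = -π⁻¹`, so `v(b₀) < 0`, and matching constant terms forces `T = t / b₀^q`, whence
`v(T) > 0`.
-/

open scoped MatrixGroups

open PowerSeries

theorem exists_seq_of_forall_exists {α : Type*} (R : ℕ → α → α → Prop)
    (h : ∀ n y, ∃ z, R n y z) (y₀ : α) : ∃ s : ℕ → α, s 0 = y₀ ∧ ∀ n, R n (s n) (s (n + 1)) := by
  choose f hf using h
  exact ⟨fun n => Nat.rec (motive := fun _ => α) y₀ f n, rfl, fun n => hf n _⟩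

theorem IsAlgClosed.exists_pow_eq_mul_pow_add {K : Type*} [Field K] [IsAlgClosed K]
    {M N : ℕ} (hMN : M < N) (w β : K) : ∃ z : K, z ^ N = w * z ^ M + β := by
  have hdeg : (Polynomial.C w * Polynomial.X ^ M + Polynomial.C β).degree <
      (Polynomial.X ^ N : Polynomial K).degree := by
    rw [Polynomial.degree_X_pow]
    refine (Polynomial.degree_add_le _ _).trans_lt (max_lt ?_ ?_)
    · exact (Polynomial.degree_C_mul_X_pow_le _ _).trans_lt (by exact_mod_cast hMN)
    · exact Polynomial.degree_C_le.trans_lt (by exact_mod_cast hMN.trans_le' M.zero_le)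
  obtain ⟨z, hz⟩ := IsAlgClosed.exists_root (Polynomial.X ^ N - (Polynomial.C w *
    Polynomial.X ^ M + Polynomial.C β)) (by
      rw [Polynomial.degree_sub_eq_left_of_degree_lt hdeg, Polynomial.degree_X_pow]
      exact_mod_cast (M.zero_le.trans_lt hMN).ne')
  exact ⟨z, by simpa [sub_eq_zero] using hz⟩

theorem PowerSeries.constantCoeff_map {R S : Type*} [CommRing R] [CommRing S] (f : R →+* S)
    (φ : R⟦X⟧) : constantCoeff (map f φ) = f (constantCoeff φ) := by
  simp only [← coeff_zero_eq_constantCoeff_apply, coeff_map]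

theorem units_inv_mul_mul_map_inv {n R : Type*} [Fintype n] [DecidableEq n] [CommRing R]
    (φ : R →+* R) {A B : Matrix n n R} (u : GL n R) (h : A * (u : Matrix n n R).map φ = u * B) :
    ((u⁻¹ : GL n R) : Matrix n n R) * A *
      ((Units.map φ.mapMatrix.toMonoidHom u⁻¹)⁻¹ : GL n R) = B := by
  rw [map_inv, inv_inv, Units.coe_map, RingHom.toMonoidHom_eq_coe, MonoidHom.coe_coe,
    RingHom.mapMatrix_apply, Matrix.mul_assoc, h, ← Matrix.mul_assoc, Units.inv_mul,
    Matrix.one_mul]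

section Frobenius

variable {K : Type*} [Field K] {q : ℕ} {σ : K →+* K}

theorem coeff_map_eq_pow (hσ : ∀ a, σ a = a ^ q) (n : ℕ) (f : K⟦X⟧) :
    coeff n (map σ f) = coeff n f ^ q := by
  rw [coeff_map, hσ]

variable [IsAlgClosed K]

theorem IsAlgClosed.exists_mul_pow_add_eq {N : ℕ} (hN : 1 < N) {π : K} (hπ : π ≠ 0) (β : K) :
    ∃ z : K, π * z ^ N + z = β := by
  obtain ⟨z, hz⟩ := IsAlgClosed.exists_pow_eq_mul_pow_add hN (-π⁻¹) (π⁻¹ * β)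
  refine ⟨z, ?_⟩
  rw [pow_one] at hz
  linear_combination π * hz + (β - z) * mul_inv_cancel₀ hπ

theorem exists_map_cube_eq (hq : 1 < q) (hσ : ∀ a, σ a = a ^ q) {π : K} (hπ : π ≠ 0) :
    ∃ x : K⟦X⟧, constantCoeff x ≠ 0 ∧
      map σ (map σ (map σ x)) = C π * map σ (map σ x) + X * x := by
  have hq2 : q * q < q * q * q := by nlinarith
  obtain ⟨x₀, hx₀⟩ := IsAlgClosed.exists_pow_nat_eq π (Nat.sub_pos_of_lt hq2)
  have hx₀0 : x₀ ≠ 0 := by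
    rintro rfl
    exact hπ (by rw [← hx₀, zero_pow (Nat.sub_pos_of_lt hq2).ne'])
  obtain ⟨s, hs0, hs⟩ := exists_seq_of_forall_exists
    (fun _ y z => z ^ (q * q * q) = π * z ^ (q * q) + y)
    (fun _ y => IsAlgClosed.exists_pow_eq_mul_pow_add hq2 π y) x₀
  refine ⟨mk s, by simpa [hs0] using hx₀0, ext fun n => ?_⟩
  cases n with
  | zero =>
    have h₀ : x₀ ^ (q * q * q) = π * x₀ ^ (q * q) := by rw [← hx₀, pow_sub_mul_pow _ hq2.le]
    simpa [constantCoeff_map, hσ, ← pow_mul, hs0] using h₀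
  | succ n => simpa [coeff_map_eq_pow hσ, ← pow_mul, coeff_succ_X_mul, coeff_C_mul] using hs n

theorem exists_map_cube_eq_pair (hq : 1 < q) (hσ : ∀ a, σ a = a ^ q) {π : K} (hπ : π ≠ 0)
    {b₀ : K} (hb₀ : π * b₀ ^ (q * q) + b₀ = 0) :
    ∃ a b : K⟦X⟧, constantCoeff b = b₀ ∧
      map σ (map σ (map σ b)) = C π * map σ (map σ a) + a ∧
      X * map σ (map σ (map σ a)) = C π * map σ (map σ b) + b := by
  -- the coefficients of `b` and `a` interlace into one sequence, each term determined by the last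
  obtain ⟨s, hs0, hs⟩ := exists_seq_of_forall_exists
    (fun _ y z => π * z ^ (q * q) + z = y ^ (q * q * q))
    (fun _ y => IsAlgClosed.exists_mul_pow_add_eq (one_lt_mul'' hq hq) hπ _) b₀
  refine ⟨mk fun n => s (2 * n + 1), mk fun n => s (2 * n), by simpa using hs0,
    ext fun n => ?_, ext fun n => ?_⟩
  · simpa [coeff_map_eq_pow hσ, ← pow_mul, coeff_C_mul] using (hs (2 * n)).symm
  · cases n with
    | zero => simpa [constantCoeff_map, hσ, ← pow_mul, hs0] using hb₀.symm
    | succ n => simpa [coeff_map_eq_pow hσ, ← pow_mul, coeff_succ_X_mul, coeff_C_mul, mul_add]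
        using (hs (2 * n + 1)).symm

theorem exists_map_eq_add (hq : 1 < q) (hσ : ∀ a, σ a = a ^ q) (β : K⟦X⟧) :
    ∃ y : K⟦X⟧, map σ y = y + β := by
  choose z hz using fun n => IsAlgClosed.exists_pow_eq_mul_pow_add hq 1 (coeff n β)
  refine ⟨mk z, ext fun n => ?_⟩
  simpa [coeff_map_eq_pow hσ] using hz n

theorem exists_map_eq_X_mul_add (hq : 1 < q) (hσ : ∀ a, σ a = a ^ q) (β : K⟦X⟧) :
    ∃ y : K⟦X⟧, map σ y = X * y + β := by
  obtain ⟨z₀, hz₀⟩ := IsAlgClosed.exists_pow_nat_eq (constantCoeff β) (zero_lt_one.trans hq)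
  obtain ⟨z, hz0, hz⟩ := exists_seq_of_forall_exists
    (fun n y z => z ^ q = y + coeff (n + 1) β)
    (fun n y => IsAlgClosed.exists_pow_nat_eq _ (zero_lt_one.trans hq)) z₀
  refine ⟨mk z, ext fun n => ?_⟩
  cases n with
  | zero => simpa [coeff_map_eq_pow hσ, hz0] using hz₀
  | succ n => simpa [coeff_map_eq_pow hσ, coeff_succ_X_mul] using hz n

end Frobenius

section Valuation

variable {K : Type*} [Field K] {v : K → WithTop ℚ} (hv0 : ∀ x, v x = ⊤ ↔ x = 0)
  (hvmul : ∀ x y, v (x * y) = v x + v y)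
include hv0 hvmul

theorem val_eq_zero_of_sq_eq_one {x : K} (hx : x * x = 1) : v x = 0 := by
  have hx0 : x ≠ 0 := left_ne_zero_of_mul_eq_one hx
  have h1 := hvmul 1 1
  have hxx := hvmul x x
  rw [one_mul] at h1
  rw [hx] at hxx
  lift v 1 to ℚ using (hv0 1).not.2 one_ne_zero with c
  lift v x to ℚ using (hv0 x).not.2 hx0 with a
  norm_cast at h1 hxx ⊢
  linarith

theorem val_one : v 1 = 0 := val_eq_zero_of_sq_eq_one hv0 hvmul (one_mul 1)

theorem val_neg (x : K) : v (-x) = v x := by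
  rw [neg_eq_neg_one_mul, hvmul, val_eq_zero_of_sq_eq_one hv0 hvmul (by ring), zero_add]

theorem val_pow (x : K) (n : ℕ) : v (x ^ n) = n • v x := by
  induction n with
  | zero => rw [pow_zero, zero_smul, val_one hv0 hvmul]
  | succ n ih => rw [pow_succ, hvmul, ih, succ_nsmul]

theorem pos_val_pow_iff {x : K} {n : ℕ} (hn : n ≠ 0) : 0 < v (x ^ n) ↔ 0 < v x := by
  rw [val_pow hv0 hvmul]
  refine ⟨fun h => lt_of_not_ge fun hx => (nsmul_nonpos hx n).not_gt h, fun hx => ?_⟩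
  rw [← Nat.succ_pred_eq_of_ne_zero hn, succ_nsmul']
  exact add_pos_of_pos_of_nonneg hx (nsmul_nonneg hx.le _)

theorem exists_root_and_pos_val [IsAlgClosed K] {q : ℕ} (hq : 1 < q) {π t : K} (hπ0 : π ≠ 0)
    (hπ : 0 < v π) (ht : 0 ≤ v t) :
    ∃ b₀ T : K, b₀ ≠ 0 ∧ π * b₀ ^ (q * q) + b₀ = 0 ∧ T * b₀ ^ q = t ∧ 0 < v T := by
  have hqq : 0 < q * q - 1 := Nat.sub_pos_of_lt (one_lt_mul'' hq hq)
  obtain ⟨w, hw⟩ := IsAlgClosed.exists_pow_nat_eq (-π) hqq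
  have hw0 : w ≠ 0 := by
    rintro rfl
    exact hπ0 (neg_eq_zero.1 (by rw [← hw, zero_pow hqq.ne']))
  have hvw : 0 < v w := by rwa [← pos_val_pow_iff hv0 hvmul hqq.ne', hw, val_neg hv0 hvmul]
  refine ⟨w⁻¹, t * w ^ q, inv_ne_zero hw0, ?_, ?_, ?_⟩
  · rw [← mul_pow_sub_one (by omega : q * q ≠ 0), inv_pow, hw]
    field_simp
    ring
  · rw [mul_assoc, ← mul_pow, mul_inv_cancel₀ hw0, one_pow, mul_one]
  · rw [hvmul, add_comm]
    exact add_pos_of_pos_of_nonneg ((pos_val_pow_iff hv0 hvmul (by omega)).2 hvw) ht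

end Valuation

section MatrixIdentity

variable {R : Type*} [CommRing R]

-- `xMat t ε` is `x_t` and `bMat 0 0 ε` is `b₂`, with `ε` the power series variable.
def xMat (t ε : R) : Matrix (Fin 5) (Fin 5) R :=
  !![1, 0, 0, 0, 0; 0, 0, 1, t, 0; 0, ε, 0, 0, 0; 0, 0, 0, 0, 1; 0, 0, 0, ε, 0]

def bMat (c₀ c₁ ε : R) : Matrix (Fin 5) (Fin 5) R :=
  !![c₀, 1, 0, 0, 0; 0, 0, 1, c₁, 0; ε, 0, 0, 0, 0; 0, 0, 0, 0, 1; 0, 0, 0, ε, 0]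

/- The columns are `Φ²f₃, Φf₃, f₃, Φf₅, f₅`, where `Φ := xMat t ε ∘ φ`, `f₃ = (x, a, b, 0, 0)`
and `f₅ = (g, c, d, 0, 1)`. -/
def basisMatrix (φ : R →+* R) (ε x a b c d g : R) : Matrix (Fin 5) (Fin 5) R :=
  !![φ (φ x), φ x, x, φ g, g;
     ε * φ (φ a), φ b, a, φ d, c;
     ε * φ (φ b), ε * φ a, b, ε * φ c, d;
     0, 0, 0, 1, 0;
     0, 0, 0, 0, 1]

theorem xMat_mul_map_basisMatrix (φ : R →+* R) {ε : R} (hε : φ ε = ε) {π t T x a b c d g : R}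
    (hx : φ (φ (φ x)) = π * φ (φ x) + ε * x)
    (hb : φ (φ (φ b)) = π * φ (φ a) + a)
    (ha : ε * φ (φ (φ a)) = π * φ (φ b) + b)
    (hg : φ (φ g) = ε * g + T * φ x)
    (hc : ε * φ (φ c) = ε * c + (T * φ b - t))
    (hd : φ (φ d) = d + T * φ a) :
    xMat t ε * (basisMatrix φ ε x a b c d g).map φ = basisMatrix φ ε x a b c d g * bMat π T ε := by
  ext i j
  fin_cases i <;> fin_cases j <;>
    simp only [xMat, bMat, basisMatrix, Matrix.mul_apply, Matrix.map_apply, Matrix.of_apply,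
      Matrix.cons_val', Matrix.cons_val, Matrix.cons_val_zero, Matrix.cons_val_one,
      Matrix.cons_val_fin_one, Fin.sum_univ_five, Fin.isValue, Fin.mk_one, Fin.zero_eta,
      Fin.reduceFinMk, map_mul, map_one, map_zero, hε, mul_one, one_mul, mul_zero, zero_mul,
      add_zero, zero_add] <;>
    first
      | linear_combination hx | linear_combination ε * hb | linear_combination ε * ha
      | linear_combination hg | linear_combination hc | linear_combination ε * hd

theorem isUnit_basisMatrix {K : Type*} [Field K] (σ : K →+* K) {x a b c d g : K⟦X⟧}
    (hx : constantCoeff x ≠ 0) (hb : constantCoeff b ≠ 0) :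
    IsUnit (basisMatrix (map σ) X x a b c d g) := by
  rw [Matrix.isUnit_iff_isUnit_det, isUnit_iff_constantCoeff, RingHom.map_det,
    RingHom.mapMatrix_apply, Matrix.det_of_isUpperTriangular]
  · simp [basisMatrix, Fin.prod_univ_five, constantCoeff_map, hx, hb]
  · intro i j hij
    fin_cases i <;> fin_cases j <;> simp_all [basisMatrix]

theorem exists_GL_xMat_mul_map_eq_mul_bMat {K : Type*} [Field K] [IsAlgClosed K] {q : ℕ}
    (hq : 1 < q) {σ : K →+* K} (hσ : ∀ a, σ a = a ^ q) {π b₀ t T : K} (hπ : π ≠ 0)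
    (hb₀0 : b₀ ≠ 0) (hb₀ : π * b₀ ^ (q * q) + b₀ = 0) (ht : T * b₀ ^ q = t) :
    ∃ F : GL (Fin 5) K⟦X⟧,
      xMat (C t) X * (F : Matrix (Fin 5) (Fin 5) K⟦X⟧).map (map σ) = F * bMat (C π) (C T) X := by
  have hqq : 1 < q * q := one_lt_mul'' hq hq
  have hσσ : ∀ a, (σ.comp σ) a = a ^ (q * q) := fun a => by simp [hσ, pow_mul]
  obtain ⟨x, hx0, hx⟩ := exists_map_cube_eq hq hσ hπ
  obtain ⟨a, b, hb0, hb, ha⟩ := exists_map_cube_eq_pair hq hσ hπ hb₀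
  obtain ⟨g, hg⟩ := exists_map_eq_X_mul_add hqq hσσ (C T * map σ x)
  obtain ⟨d, hd⟩ := exists_map_eq_add hqq hσσ (C T * map σ a)
  obtain ⟨β, hβ⟩ : X ∣ C T * map σ b - C t := by
    rw [X_dvd_iff]
    simp [constantCoeff_map, hb0, hσ, ht]
  obtain ⟨c, hc⟩ := exists_map_eq_add hqq hσσ β
  rw [map_comp, RingHom.comp_apply] at hg hd hc
  obtain ⟨F, hF⟩ : IsUnit (basisMatrix (map σ) X x a b c d g) :=
    isUnit_basisMatrix σ hx0 (hb0 ▸ hb₀0)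
  exact ⟨F, hF ▸ xMat_mul_map_basisMatrix (map σ) (map_X σ) hx hb ha hg
    (by rw [hβ, hc]; ring) hd⟩

theorem coeff_bMat_sub_bMat_mem {K : Type*} [CommRing K] (c₀ c₁ : K) (i j : Fin 5) (m : ℕ) :
    coeff m ((bMat (C c₀) (C c₁) X - bMat 0 0 X : Matrix (Fin 5) (Fin 5) K⟦X⟧) i j) ∈
      ({0, c₀, c₁} : Set K) := by
  fin_cases i <;> fin_cases j <;> rcases m with _ | m <;> simp [bMat, coeff_C]

end MatrixIdentity

theorem statement5_general (p r q : ℕ) [Fact p.Prime] (hr : 0 < r) (hq : q = p ^ r)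
    (k : Type*) [Field k]
    (k' : Type*) [Field k'] [Algebra (LaurentSeries k) k'] [IsAlgClosure (LaurentSeries k) k']
    (π : k')
    (v : k' → WithTop ℚ)
    (hv0 : ∀ x : k', v x = ⊤ ↔ x = 0)
    (hvmul : ∀ x y : k', v (x * y) = v x + v y)
    (hvπ : v π = 1)
    (σ : k' →+* k') (hσ : ∀ a : k', σ a = a ^ q)
    (t : k') (ht : 0 ≤ v t) :
    ∃ h : GL (Fin 5) (PowerSeries k'),
      ∀ i j : Fin 5, ∀ m : ℕ,
        0 < v (PowerSeries.coeff (R := k') m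
          (((h : Matrix (Fin 5) (Fin 5) (PowerSeries k')) *
            (!![1, 0, 0, 0, 0;
                0, 0, 1, PowerSeries.C (R := k') t, 0;
                0, PowerSeries.X, 0, 0, 0;
                0, 0, 0, 0, 1;
                0, 0, 0, PowerSeries.X, 0] : Matrix (Fin 5) (Fin 5) (PowerSeries k')) *
            (((Units.map (RingHom.mapMatrix (PowerSeries.map σ)).toMonoidHom h)⁻¹ :
                GL (Fin 5) (PowerSeries k')) : Matrix (Fin 5) (Fin 5) (PowerSeries k')) -
            (!![0, 1, 0, 0, 0;
                0, 0, 1, 0, 0;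
                PowerSeries.X, 0, 0, 0, 0;
                0, 0, 0, 0, 1;
                0, 0, 0, PowerSeries.X, 0] : Matrix (Fin 5) (Fin 5) (PowerSeries k'))) i j)) := by
  have : IsAlgClosed k' := IsAlgClosure.isAlgClosed (LaurentSeries k)
  have hq1 : 1 < q := hq ▸ Nat.one_lt_pow hr.ne' (Fact.out : p.Prime).one_lt
  have hπ : 0 < v π := hvπ ▸ WithTop.coe_lt_coe.2 one_pos
  have hπ0 : π ≠ 0 := fun h => by simp [(hv0 π).2 h] at hvπ
  obtain ⟨b₀, T, hb₀0, hb₀, hbT, hT⟩ := exists_root_and_pos_val hv0 hvmul hq1 hπ0 hπ ht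
  obtain ⟨F, hF⟩ := exists_GL_xMat_mul_map_eq_mul_bMat hq1 hσ hπ0 hb₀0 hb₀ hbT
  refine ⟨F⁻¹, fun i j m => ?_⟩
  show 0 < v (coeff m ((_ * xMat (C t) X * _ - bMat 0 0 X : Matrix (Fin 5) (Fin 5) k'⟦X⟧) i j))
  rw [units_inv_mul_mul_map_inv (map σ) F hF]
  rcases coeff_bMat_sub_bMat_mem π T i j m with h | h | h <;> rw [h]
  exacts [((hv0 0).2 rfl).symm ▸ WithTop.coe_lt_top 0, hπ, hT]

set_option synthInstance.maxHeartbeats 1000000 in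
/-- The specialization core of Lemma 3.2: for every `t ∈ k'` with `v(t) ≥ 0` there is
`h ∈ GL₅(k'[[ε]])` such that every `ε`-coefficient of every entry of
`h·x_t·σ(h)⁻¹ − b₂` has strictly positive valuation. -/
theorem statement5 (p r q : ℕ) [Fact p.Prime] (hr : 0 < r) (hq : q = p ^ r)
    (k : Type*) [Field k] [Algebra (GaloisField p r) k] [IsAlgClosure (GaloisField p r) k]
    (k' : Type*) [Field k'] [Algebra (LaurentSeries k) k'] [IsAlgClosure (LaurentSeries k) k']
    (π : k') (hπ : π = algebraMap (LaurentSeries k) k' (HahnSeries.single (1 : ℤ) 1))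
    (v : k' → WithTop ℚ)
    (hv0 : ∀ x : k', v x = ⊤ ↔ x = 0)
    (hvmul : ∀ x y : k', v (x * y) = v x + v y)
    (hvadd : ∀ x y : k', min (v x) (v y) ≤ v (x + y))
    (hvπ : v π = 1)
    (σ : k' →+* k') (hσ : ∀ a : k', σ a = a ^ q)
    (t : k') (ht : 0 ≤ v t) :
    ∃ h : GL (Fin 5) (PowerSeries k'),
      ∀ i j : Fin 5, ∀ m : ℕ,
        0 < v (PowerSeries.coeff (R := k') m
          (((h : Matrix (Fin 5) (Fin 5) (PowerSeries k')) *
            (!![1, 0, 0, 0, 0;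
                0, 0, 1, PowerSeries.C (R := k') t, 0;
                0, PowerSeries.X, 0, 0, 0;
                0, 0, 0, 0, 1;
                0, 0, 0, PowerSeries.X, 0] : Matrix (Fin 5) (Fin 5) (PowerSeries k')) *
            (((Units.map (RingHom.mapMatrix (PowerSeries.map σ)).toMonoidHom h)⁻¹ :
                GL (Fin 5) (PowerSeries k')) : Matrix (Fin 5) (Fin 5) (PowerSeries k')) -
            (!![0, 1, 0, 0, 0;
                0, 0, 1, 0, 0;
                PowerSeries.X, 0, 0, 0, 0;
                0, 0, 0, 0, 1;
                0, 0, 0, PowerSeries.X, 0] : Matrix (Fin 5) (Fin 5) (PowerSeries k'))) i j)) :=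
  statement5_general p r q hr hq k k' π v hv0 hvmul hvπ σ hσ t ht
end

section
/- Suppose (x_i)_{i≥0}, (y_i)_{i≥0}, (z_i)_{i≥0} are elements of k' satisfying: z₀ ≠ 0; z₀^{q⁵} = π·z₀^{q²}; and for all i ≥ 0: x_i^{q⁵} = y_i + π·x_i^{q²}, y_i^{q⁵} = z_i + π·y_i^{q²}, and z_{i+1}^{q⁵} = x_i + π·z_{i+1}^{q²}. Then for all i ≥ 0 one has v(x_i) = 1/(q^{15i+12}(q³−1)), v(y_i) = 1/(q^{15i+7}(q³−1)), and v(z_i) = 1/(q^{15i+2}(q³−1)). -/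
section aux
variable {k' : Type*} [Field k'] (v : k' → WithTop ℚ)

lemma aux_v1 (hv0 : ∀ s : k', v s = ⊤ ↔ s = 0)
    (hvmul : ∀ s u : k', v (s * u) = v s + v u) : v 1 = 0 := by
  have h := hvmul 1 1
  rw [mul_one] at h
  have hne : v (1 : k') ≠ ⊤ := by simp [hv0]
  obtain ⟨a, ha⟩ := WithTop.ne_top_iff_exists.mp hne
  rw [← ha] at h ⊢
  rw [← WithTop.coe_add, WithTop.coe_eq_coe] at h
  norm_cast
  linarith

lemma aux_vneg (hv0 : ∀ s : k', v s = ⊤ ↔ s = 0)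
    (hvmul : ∀ s u : k', v (s * u) = v s + v u) (s : k') : v (-s) = v s := by
  have h1 : v ((-1 : k') * (-1)) = v (-1) + v (-1) := hvmul _ _
  rw [neg_one_mul, neg_neg, aux_v1 v hv0 hvmul] at h1
  have hne : v (-1 : k') ≠ ⊤ := by simp [hv0]
  obtain ⟨a, ha⟩ := WithTop.ne_top_iff_exists.mp hne
  rw [← ha] at h1
  rw [← WithTop.coe_add, eq_comm, WithTop.coe_eq_zero] at h1
  have ha0 : a = 0 := by linarith
  have : v (-s) = v (-1) + v s := by rw [← hvmul, neg_one_mul]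
  rw [this, ← ha, ha0]
  simp

lemma aux_vpow (hv0 : ∀ s : k', v s = ⊤ ↔ s = 0)
    (hvmul : ∀ s u : k', v (s * u) = v s + v u)
    (s : k') (a : ℚ) (hs : v s = (a : WithTop ℚ)) (n : ℕ) :
    v (s ^ n) = (((n : ℚ) * a : ℚ) : WithTop ℚ) := by
  induction n with
  | zero => simpa using aux_v1 v hv0 hvmul
  | succ n ih =>
    rw [pow_succ, hvmul, ih, hs, ← WithTop.coe_add, WithTop.coe_eq_coe]
    push_cast
    ring

lemma aux_vadd_eq (hv0 : ∀ s : k', v s = ⊤ ↔ s = 0)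
    (hvmul : ∀ s u : k', v (s * u) = v s + v u)
    (hvadd : ∀ s u : k', min (v s) (v u) ≤ v (s + u))
    (s u : k') (h : v s < v u) : v (s + u) = v s := by
  have h1 : v s ≤ v (s + u) := by
    have := hvadd s u
    rwa [min_eq_left h.le] at this
  have h2 : v s = v ((s + u) + (-u)) := by ring_nf
  have h3 : min (v (s + u)) (v (-u)) ≤ v s := h2 ▸ hvadd (s + u) (-u)
  rw [aux_vneg v hv0 hvmul] at h3
  rcases min_le_iff.mp h3 with h4 | h4
  · exact le_antisymm h4 h1
  · exact absurd (h4.trans_lt h) (lt_irrefl _)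

lemma aux_vadd_min (hv0 : ∀ s : k', v s = ⊤ ↔ s = 0)
    (hvmul : ∀ s u : k', v (s * u) = v s + v u)
    (hvadd : ∀ s u : k', min (v s) (v u) ≤ v (s + u))
    (s u : k') (h : v s ≠ v u) : v (s + u) = min (v s) (v u) := by
  rcases lt_or_gt_of_ne h with hlt | hlt
  · rw [aux_vadd_eq v hv0 hvmul hvadd s u hlt, min_eq_left hlt.le]
  · rw [add_comm, aux_vadd_eq v hv0 hvmul hvadd u s hlt, min_eq_right hlt.le]

lemma aux_step (hv0 : ∀ s : k', v s = ⊤ ↔ s = 0)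
    (hvmul : ∀ s u : k', v (s * u) = v s + v u)
    (hvadd : ∀ s u : k', min (v s) (v u) ≤ v (s + u))
    (q : ℕ) (hq : 2 ≤ q) (π w zz : k')
    (hvπ : v π = 1)
    (hw : w ^ q ^ 5 = zz + π * w ^ q ^ 2) (hz : zz ≠ 0)
    (c : ℚ) (hc1 : c < 1) (hvz : v zz = (c : WithTop ℚ)) :
    w ≠ 0 ∧ v w = ((c / (q : ℚ) ^ 5 : ℚ) : WithTop ℚ) := by
  have hQ : (2 : ℚ) ≤ (q : ℚ) := by exact_mod_cast hq
  set Q : ℚ := (q : ℚ) with hQdef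
  have hQ3 : (8 : ℚ) ≤ Q ^ 3 := by
    have := pow_le_pow_left₀ (by norm_num : (0:ℚ) ≤ 2) hQ 3
    norm_num at this
    linarith
  have hwne : w ≠ 0 := by
    intro h0
    apply hz
    have h1 := hw
    rw [h0, zero_pow (by positivity : q ^ 5 ≠ 0), zero_pow (by positivity : q ^ 2 ≠ 0)] at h1
    simpa using h1.symm
  have hvwne : v w ≠ ⊤ := by simp [hv0, hwne]
  obtain ⟨a, ha⟩ := WithTop.ne_top_iff_exists.mp hvwne
  have hA : v (w ^ q ^ 5) = ((Q ^ 5 * a : ℚ) : WithTop ℚ) := by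
    rw [aux_vpow v hv0 hvmul w a ha.symm, WithTop.coe_eq_coe]
    push_cast; ring
  have hC : v (π * w ^ q ^ 2) = ((1 + Q ^ 2 * a : ℚ) : WithTop ℚ) := by
    rw [hvmul, aux_vpow v hv0 hvmul w a ha.symm, hvπ]
    rw [show ((1 : WithTop ℚ)) = ((1 : ℚ) : WithTop ℚ) by norm_cast, ← WithTop.coe_add,
      WithTop.coe_eq_coe]
    push_cast; ring
  have key : Q ^ 5 * a = c := by
    by_cases hBC : c = 1 + Q ^ 2 * a
    · exfalso
      have hge : min (v zz) (v (π * w ^ q ^ 2)) ≤ v (w ^ q ^ 5) := hw ▸ hvadd _ _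
      rw [hvz, hC, hA, ← hBC, min_self, WithTop.coe_le_coe] at hge
      nlinarith
    · have heq : v (w ^ q ^ 5) = min (v zz) (v (π * w ^ q ^ 2)) := by
        rw [hw]
        exact aux_vadd_min v hv0 hvmul hvadd _ _ (by rw [hvz, hC]; exact_mod_cast hBC)
      rw [hA, hvz, hC, ← WithTop.coe_min, WithTop.coe_eq_coe] at heq
      rcases min_cases c (1 + Q ^ 2 * a) with ⟨hm, hle⟩ | ⟨hm, hle⟩
      · rw [heq, hm]
      · exfalso
        rw [hm] at heq
        nlinarith
  refine ⟨hwne, ?_⟩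
  rw [← ha, WithTop.coe_eq_coe]
  have hQ0 : Q ^ 5 ≠ 0 := by positivity
  field_simp
  linarith [key]

end aux


set_option synthInstance.maxHeartbeats 1000000 in
/-- The valuation computation for the recursions of Section 3.3 for the second-column
entries `xᵢ = g¹²ᵢ`, `yᵢ = g²²ᵢ`, `zᵢ = g³²ᵢ`:
`v(xᵢ) = 1/(q^{15i+12}(q³−1))`, `v(yᵢ) = 1/(q^{15i+7}(q³−1))`,
`v(zᵢ) = 1/(q^{15i+2}(q³−1))`. -/
theorem statement8 (p r q : ℕ) [Fact p.Prime] (hr : 0 < r) (hq : q = p ^ r)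
    (k : Type*) [Field k] [Algebra (GaloisField p r) k] [IsAlgClosure (GaloisField p r) k]
    (k' : Type*) [Field k'] [Algebra (LaurentSeries k) k'] [IsAlgClosure (LaurentSeries k) k']
    (π : k') (hπ : π = algebraMap (LaurentSeries k) k' (HahnSeries.single (1 : ℤ) 1))
    (v : k' → WithTop ℚ)
    (hv0 : ∀ s : k', v s = ⊤ ↔ s = 0)
    (hvmul : ∀ s u : k', v (s * u) = v s + v u)
    (hvadd : ∀ s u : k', min (v s) (v u) ≤ v (s + u))
    (hvπ : v π = 1)
    (x y z : ℕ → k')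
    (hz0 : z 0 ≠ 0)
    (hzz : z 0 ^ q ^ 5 = π * z 0 ^ q ^ 2)
    (hxr : ∀ i : ℕ, x i ^ q ^ 5 = y i + π * x i ^ q ^ 2)
    (hyr : ∀ i : ℕ, y i ^ q ^ 5 = z i + π * y i ^ q ^ 2)
    (hzr : ∀ i : ℕ, z (i + 1) ^ q ^ 5 = x i + π * z (i + 1) ^ q ^ 2) :
    ∀ i : ℕ,
      v (x i) = ((1 / ((q : ℚ) ^ (15 * i + 12) * ((q : ℚ) ^ 3 - 1)) : ℚ) : WithTop ℚ) ∧
      v (y i) = ((1 / ((q : ℚ) ^ (15 * i + 7) * ((q : ℚ) ^ 3 - 1)) : ℚ) : WithTop ℚ) ∧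
      v (z i) = ((1 / ((q : ℚ) ^ (15 * i + 2) * ((q : ℚ) ^ 3 - 1)) : ℚ) : WithTop ℚ) := by
  -- setup
  have hp2 : 2 ≤ p := (Fact.out : p.Prime).two_le
  have hq2 : 2 ≤ q := by
    rw [hq]
    calc 2 ≤ p := hp2
    _ = p ^ 1 := (pow_one p).symm
    _ ≤ p ^ r := Nat.pow_le_pow_right (by omega) hr
  have hQ : (2 : ℚ) ≤ (q : ℚ) := by exact_mod_cast hq2
  set Q : ℚ := (q : ℚ) with hQdef
  have hQ3 : (8 : ℚ) ≤ Q ^ 3 := by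
    have := pow_le_pow_left₀ (by norm_num : (0:ℚ) ≤ 2) hQ 3
    norm_num at this
    linarith
  have hQn : ∀ n : ℕ, (1 : ℚ) ≤ Q ^ n := fun n => one_le_pow₀ (by linarith)
  have hlt1 : ∀ n : ℕ, 1 / (Q ^ n * (Q ^ 3 - 1)) < 1 := by
    intro n
    have hD : (7 : ℚ) ≤ Q ^ n * (Q ^ 3 - 1) := by nlinarith [hQn n]
    rw [div_lt_one (by linarith)]
    linarith
  have hdiv : ∀ n : ℕ, (1 / (Q ^ n * (Q ^ 3 - 1))) / Q ^ 5 = 1 / (Q ^ (n + 5) * (Q ^ 3 - 1)) := by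
    intro n
    have hQ0 : Q ≠ 0 := by linarith
    rw [pow_add]
    field_simp
  -- base: valuation of z 0
  have hvz0 : v (z 0) = ((1 / (Q ^ 2 * (Q ^ 3 - 1)) : ℚ) : WithTop ℚ) := by
    have hvne : v (z 0) ≠ ⊤ := by simp [hv0, hz0]
    obtain ⟨a, ha⟩ := WithTop.ne_top_iff_exists.mp hvne
    have hA : v (z 0 ^ q ^ 5) = ((Q ^ 5 * a : ℚ) : WithTop ℚ) := by
      rw [aux_vpow v hv0 hvmul (z 0) a ha.symm, WithTop.coe_eq_coe]
      push_cast; ring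
    have hC : v (π * z 0 ^ q ^ 2) = ((1 + Q ^ 2 * a : ℚ) : WithTop ℚ) := by
      rw [hvmul, aux_vpow v hv0 hvmul (z 0) a ha.symm, hvπ]
      rw [show ((1 : WithTop ℚ)) = ((1 : ℚ) : WithTop ℚ) by norm_cast, ← WithTop.coe_add,
        WithTop.coe_eq_coe]
      push_cast; ring
    have heq : Q ^ 5 * a = 1 + Q ^ 2 * a := by
      have h2 : v (z 0 ^ q ^ 5) = v (π * z 0 ^ q ^ 2) := by rw [hzz]
      rw [hA, hC, WithTop.coe_eq_coe] at h2
      exact h2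
    rw [← ha, WithTop.coe_eq_coe]
    rw [eq_div_iff (by nlinarith [hQn 2] : Q ^ 2 * (Q ^ 3 - 1) ≠ 0)]
    linear_combination heq
  -- main induction on z
  have key : ∀ i : ℕ, z i ≠ 0 ∧
      v (z i) = ((1 / (Q ^ (15 * i + 2) * (Q ^ 3 - 1)) : ℚ) : WithTop ℚ) := by
    intro i
    induction i with
    | zero => exact ⟨hz0, by simpa using hvz0⟩
    | succ i ih =>
      obtain ⟨hzne, hvz⟩ := ih
      have hy := aux_step v hv0 hvmul hvadd q hq2 π (y i) (z i) hvπ (hyr i) hzne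
        _ (hlt1 _) hvz
      rw [hdiv] at hy
      have hx := aux_step v hv0 hvmul hvadd q hq2 π (x i) (y i) hvπ (hxr i) hy.1
        _ (hlt1 _) hy.2
      rw [hdiv] at hx
      have hz' := aux_step v hv0 hvmul hvadd q hq2 π (z (i + 1)) (x i) hvπ (hzr i) hx.1
        _ (hlt1 _) hx.2
      rw [hdiv] at hz'
      refine ⟨hz'.1, ?_⟩
      rw [hz'.2, show 15 * i + 2 + 5 + 5 + 5 = 15 * (i + 1) + 2 from by ring]
  -- conclude
  intro i
  obtain ⟨hzne, hvz⟩ := key i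
  have hy := aux_step v hv0 hvmul hvadd q hq2 π (y i) (z i) hvπ (hyr i) hzne
    _ (hlt1 _) hvz
  rw [hdiv] at hy
  have hx := aux_step v hv0 hvmul hvadd q hq2 π (x i) (y i) hvπ (hxr i) hy.1
    _ (hlt1 _) hy.2
  rw [hdiv] at hx
  rw [show 15 * i + 2 + 5 = 15 * i + 7 from by ring] at hy
  rw [show 15 * i + 2 + 5 + 5 = 15 * i + 12 from by ring] at hx
  exact ⟨hx.2, hy.2, hvz⟩
end
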